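/- Let G be a graph and let M be a nontrivial, unbounded graph matroid family with dimensionality d and threshold t. If G is k-connected, k-vertex-redundantly M-rigid, and has at least k + t vertices, then the matroid M(G) is vertically (k+1)-connected. -/

import Mathlib

/-!
Common framework: graph matroid families.

A finite simple graph (without isolated vertices) is identified with its edge
set: a finite set of non-diagonal elements of `Sym2 ℕ`.  A graph matroid
family is encoded, following the paper, as a finitary matroid on the edge set
of the countable complete graph on `ℕ` that is invariant under all
permutations of `ℕ`.
-/

/-- The set of vertices covered by a set of edges. -/
def eSupp (E : Set (Sym2 ℕ)) : Set ℕ := {v : ℕ | ∃ e ∈ E, v ∈ e}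

/-- The edge set of the complete graph on the vertex set `V`. -/
def clique (V : Set ℕ) : Set (Sym2 ℕ) := {e : Sym2 ℕ | ¬ e.IsDiag ∧ ∀ v ∈ e, v ∈ V}

/-- The edge set of the complete graph `K_n` on the vertices `0, …, n-1`. -/
def cliqueN (n : ℕ) : Set (Sym2 ℕ) := clique {v : ℕ | v < n}

/-- `E` is (the edge set of) a finite simple graph. -/
def IsGraph (E : Set (Sym2 ℕ)) : Prop := E.Finite ∧ ∀ e ∈ E, ¬ e.IsDiag

/-- The degree of the vertex `v` in the edge set `E`. -/
noncomputable def deg (E : Set (Sym2 ℕ)) (v : ℕ) : ℕ := {e ∈ E | v ∈ e}.ncard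

/-- The minimum degree of (the graph with) edge set `E` (whose vertex set is `eSupp E`). -/
noncomputable def minDeg (E : Set (Sym2 ℕ)) : ℕ := sInf {k : ℕ | ∃ v ∈ eSupp E, deg E v = k}

/-- Deleting a set `S` of vertices from the graph with edge set `E`. -/
def deleteVerts (E : Set (Sym2 ℕ)) (S : Set ℕ) : Set (Sym2 ℕ) := {e ∈ E | ∀ v ∈ e, v ∉ S}

/-- The graph with edge set `E` is `k`-connected: it has more than `k` vertices and
deleting any set of fewer than `k` vertices leaves a connected graph. -/
def KConnected (k : ℕ) (E : Set (Sym2 ℕ)) : Prop :=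
  k < (eSupp E).ncard ∧
  ∀ S : Finset ℕ, S.card < k →
    ((SimpleGraph.fromEdgeSet E).induce (eSupp E \ ↑S)).Connected

/-- `E` is a forest. -/
def IsForest (E : Set (Sym2 ℕ)) : Prop := (SimpleGraph.fromEdgeSet E).IsAcyclic

/-- `E` is a matching: no two distinct edges of `E` share a vertex. -/
def IsMatching (E : Set (Sym2 ℕ)) : Prop :=
  ∀ e ∈ E, ∀ f ∈ E, e ≠ f → ∀ v : ℕ, v ∈ e → v ∉ f

/-- `E` is a star `K_{1,m}` with `m` edges. -/
def IsStar (m : ℕ) (E : Set (Sym2 ℕ)) : Prop :=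
  ∃ (c : ℕ) (L : Finset ℕ), c ∉ L ∧ L.card = m ∧ E = (fun x => s(c, x)) '' ↑L

/-- `C` is a cycle graph `C_n` for some `n ≥ 3`. -/
def IsCycleGraph (C : Set (Sym2 ℕ)) : Prop :=
  ∃ n : ℕ, 3 ≤ n ∧ ∃ f : ZMod n → ℕ, Function.Injective f ∧
    C = {e : Sym2 ℕ | ∃ i : ZMod n, e = s(f i, f (i + 1))}

/-- The rank of the set `X` in the matroid `M₀`: the supremum of the cardinalities of
independent subsets of `X` (as a natural number; all sets we use are finite). -/
noncomputable def mrk (M₀ : Matroid (Sym2 ℕ)) (X : Set (Sym2 ℕ)) : ℕ :=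
  sSup {n : ℕ | ∃ I ⊆ X, M₀.Indep I ∧ I.ncard = n}

/-- A vertical `k`-separation of the matroid `M₀`. -/
def VerticalSep (M₀ : Matroid (Sym2 ℕ)) (k : ℕ) (E₁ E₂ : Set (Sym2 ℕ)) : Prop :=
  Disjoint E₁ E₂ ∧ E₁ ∪ E₂ = M₀.E ∧
  k ≤ mrk M₀ E₁ ∧ k ≤ mrk M₀ E₂ ∧
  mrk M₀ E₁ + mrk M₀ E₂ + 1 ≤ mrk M₀ M₀.E + k

/-- The matroid `M₀` is vertically `k`-connected. -/
def VerticallyConnected (M₀ : Matroid (Sym2 ℕ)) (k : ℕ) : Prop :=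
  k ≤ mrk M₀ M₀.E ∧
  ∀ k' : ℕ, 0 < k' → k' < k → ∀ E₁ E₂ : Set (Sym2 ℕ), ¬ VerticalSep M₀ k' E₁ E₂

/-- A `d`-dimensional abstract rigidity matroid on the complete graph with vertex set `V`. -/
def IsARM (d : ℕ) (V : Set ℕ) (M₀ : Matroid (Sym2 ℕ)) : Prop :=
  M₀.E = clique V ∧
  (∀ E₁ E₂ : Set (Sym2 ℕ), E₁ ⊆ clique V → E₂ ⊆ clique V →
      (eSupp E₁ ∩ eSupp E₂).ncard < d →
      M₀.closure (E₁ ∪ E₂) = M₀.closure E₁ ∪ M₀.closure E₂) ∧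
  (∀ E₁ E₂ : Set (Sym2 ℕ), E₁ ⊆ clique V → E₂ ⊆ clique V →
      d ≤ (eSupp E₁ ∩ eSupp E₂).ncard →
      M₀.closure E₁ = clique (eSupp E₁) → M₀.closure E₂ = clique (eSupp E₂) →
      M₀.closure (E₁ ∪ E₂) = clique (eSupp E₁ ∪ eSupp E₂))

/-- The `d`-dimensional edge split operation: replace an edge `uv` of `G` by a new
vertex `w` joined to `u` and `v`, as well as to `d - 1` other vertices of `G`. -/
def EdgeSplit (d : ℕ) (G G' : Set (Sym2 ℕ)) : Prop :=
  ∃ (u v w : ℕ) (X : Finset ℕ),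
    s(u, v) ∈ G ∧ w ∉ eSupp G ∧ ↑X ⊆ eSupp G ∧ X.card = d - 1 ∧ u ∉ X ∧ v ∉ X ∧
    G' = (G \ {s(u, v)}) ∪ {s(w, u), s(w, v)} ∪ ((fun x => s(w, x)) '' ↑X)

/-- A graph matroid family: a finitary matroid on the edge set of the countable
complete graph on `ℕ`, invariant under all permutations of `ℕ`. -/
structure GraphMatroidFamily where
  /-- The underlying matroid on the edge set of `K_ℕ`. -/
  M : Matroid (Sym2 ℕ)
  ground_eq : M.E = {e : Sym2 ℕ | ¬ e.IsDiag}
  finitary : M.Finitary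
  invariant : ∀ σ : Equiv.Perm ℕ, ∀ I : Set (Sym2 ℕ),
    M.Indep I → M.Indep (Sym2.map σ '' I)

namespace GraphMatroidFamily

variable (M : GraphMatroidFamily)

/-- The rank function of the family: `M.rk E` is the rank of the matroid `M(G)` for
any graph `G` whose edge set contains `E`. -/
noncomputable def rk (E : Set (Sym2 ℕ)) : ℕ := mrk M.M E

/-- A set of edges (a graph) is `M`-independent. -/
def Indep (E : Set (Sym2 ℕ)) : Prop := M.M.Indep E

/-- `C` is an `M`-circuit: a graph that is not `M`-independent, but such that deleting
any single edge from it yields an `M`-independent graph. -/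
def IsCircuit (C : Set (Sym2 ℕ)) : Prop :=
  IsGraph C ∧ ¬ M.Indep C ∧ ∀ e ∈ C, M.Indep (C \ {e})

/-- The graph with edge set `E` is `M`-rigid. -/
def Rigid (E : Set (Sym2 ℕ)) : Prop := M.rk E = M.rk (clique (eSupp E))

/-- The graph with vertex set `V` and edge set `E` is `M`-rigid. -/
def RigidOn (V : Set ℕ) (E : Set (Sym2 ℕ)) : Prop := M.rk E = M.rk (clique V)

/-- `M` is trivial if every (finite, simple) graph is `M`-independent. -/
def Trivial : Prop := ∀ E : Set (Sym2 ℕ), IsGraph E → M.Indep E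

/-- `M` is unbounded: the sequence `r(K_n)` is unbounded. -/
def Unbounded : Prop := ∀ B : ℕ, ∃ n : ℕ, B < M.rk (cliqueN n)

/-- `M` is bounded: the sequence `r(K_n)` is bounded. -/
def Bounded : Prop := ∃ B : ℕ, ∀ n : ℕ, M.rk (cliqueN n) ≤ B

/-- For a bounded family, `m` is the rank `r(M)` of `M`: the maximum (limit) of the
monotone sequence `r(K_n)`. -/
def HasRank (m : ℕ) : Prop :=
  (∀ n : ℕ, M.rk (cliqueN n) ≤ m) ∧ ∃ n : ℕ, M.rk (cliqueN n) = m

/-- `d` is the dimensionality of (the nontrivial family) `M`: the least `d` such that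
there is an `M`-circuit with minimum degree `d + 1`. -/
def IsDimensionality (d : ℕ) : Prop :=
  IsLeast {d : ℕ | ∃ C, M.IsCircuit C ∧ minDeg C = d + 1} d

/-- `t` is the threshold of (the nontrivial family) `M` with dimensionality `d`:
the least value of `|V(C)| - 1` over all `M`-circuits `C` with minimum degree `d + 1`. -/
def IsThreshold (d t : ℕ) : Prop :=
  IsLeast {t : ℕ | ∃ C, M.IsCircuit C ∧ minDeg C = d + 1 ∧ (eSupp C).ncard = t + 1} t

/-- `M` has the Lovász–Yemini property. -/
def LovaszYemini : Prop :=
  ∃ c : ℕ, ∀ E : Set (Sym2 ℕ), IsGraph E → KConnected c E → M.Rigid E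

/-- `ψ` is an isomorphism between the matroids `M(G)` and `M(H)`. -/
def MatroidIso (G H : Set (Sym2 ℕ)) (ψ : Sym2 ℕ → Sym2 ℕ) : Prop :=
  Set.BijOn ψ G H ∧ ∀ S ⊆ G, (M.Indep S ↔ M.Indep (ψ '' S))

/-- `G` is `M`-reconstructible: every isomorphism between `M(G)` and `M(H)` (for a graph
`H` without isolated vertices) is induced by a graph isomorphism. -/
def Reconstructible (G : Set (Sym2 ℕ)) : Prop :=
  ∀ H : Set (Sym2 ℕ), IsGraph H → ∀ ψ : Sym2 ℕ → Sym2 ℕ, M.MatroidIso G H ψ →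
    ∃ φ : ℕ → ℕ, Set.BijOn φ (eSupp G) (eSupp H) ∧ ∀ e ∈ G, ψ e = Sym2.map φ e

/-- `M` has the Whitney property. -/
def Whitney : Prop :=
  ∃ c : ℕ, ∀ E : Set (Sym2 ℕ), IsGraph E → KConnected c E → M.Reconstructible E

/-- `M` is the union of the graph matroid families `Ms`. -/
def IsUnionOf {k : ℕ} (Ms : Fin k → GraphMatroidFamily) : Prop :=
  ∀ I : Set (Sym2 ℕ),
    M.Indep I ↔ ∃ Is : Fin k → Set (Sym2 ℕ), (∀ i, (Ms i).Indep (Is i)) ∧ I = ⋃ i, Is i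

/-- `M` is a family of `d`-dimensional abstract rigidity matroids. -/
def FamilyOfARM (d : ℕ) : Prop :=
  ∀ n : ℕ, d ≤ n → IsARM d {v : ℕ | v < n} (M.M.restrict (cliqueN n))

/-- `M` is `1`-extendable: its dimensionality `d` is finite and positive, and the
`d`-dimensional edge split operation preserves `M`-independence. -/
def OneExtendable : Prop :=
  ∃ d : ℕ, 0 < d ∧ M.IsDimensionality d ∧
    ∀ G G' : Set (Sym2 ℕ), IsGraph G → M.Indep G → EdgeSplit d G G' → M.Indep G'

/-- `G` is `k`-vertex-redundantly `M`-rigid. -/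
def VertexRedundantlyRigid (k : ℕ) (G : Set (Sym2 ℕ)) : Prop :=
  M.Rigid G ∧ ∀ S : Finset ℕ, ↑S ⊆ eSupp G → S.card ≤ k →
    M.RigidOn (eSupp G \ ↑S) (deleteVerts G ↑S)

end GraphMatroidFamily

/-!
The proof is by induction on `k`, for the stronger statement that every bipartition
`(E₁, E₂)` of `E(G)` satisfies `r(E₁) + r(E₂) ≥ r(G) + min(r(E₁), r(E₂), k)`.

Two rank increments drive it. Since every `M`-circuit has minimum degree at least `d + 1`,
adding a vertex joined by `j` edges raises the rank by at least `min(j, d)`. Adding a vertex to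
a complete graph on at least `t` vertices raises its rank by exactly `d`: a threshold circuit,
relabelled so that a vertex of degree `d + 1` becomes the new vertex, spans every further edge
at it from `d` fixed ones. In particular `d > 0`, as `M` is unbounded, and
`r(K_V) ≥ d (|V| - d)`. For `G` itself, `k`-vertex-redundant rigidity then forces minimum degree
at least `d + k`, `r(G - v) = r(G) - d` for every vertex `v`, and `r(G) ≥ d (|V(G)| - d)`.

At level `k + 1` a violating bipartition is tight, `r(E₁) + r(E₂) = r(G) + k`, and one side,
say `E₁`, has rank at least `k + d`. Take for `v` a vertex of minimum degree in `E₂` if it also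
lies in `E₁`, and otherwise any common vertex of the two sides (`G` is connected). Deleting `v`
lowers `r(G)` by `d` but `r(E₁) + r(E₂)` by more than `d` while keeping both sides large; this
contradicts the bound at level `k` for the `k`-connected, `k`-vertex-redundantly rigid graph
`G - v`.
-/

open Set

section Rank

variable {M₀ : Matroid (Sym2 ℕ)} {X Y I : Set (Sym2 ℕ)}

theorem cast_mrk (hX : X.Finite) : (mrk M₀ X : ℕ∞) = M₀.eRk X := by
  obtain ⟨I, hI⟩ := M₀.exists_isBasis' X
  have hIfin : I.Finite := hX.subset hI.subset
  have hgreatest : IsGreatest {n | ∃ J ⊆ X, M₀.Indep J ∧ J.ncard = n} I.ncard := by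
    refine ⟨⟨I, hI.subset, hI.indep, rfl⟩, ?_⟩
    rintro _ ⟨J, hJX, hJ, rfl⟩
    have hle := hJ.encard_le_eRk_of_subset hJX
    rwa [← hI.encard_eq_eRk, ← (hX.subset hJX).cast_ncard_eq, ← hIfin.cast_ncard_eq,
      Nat.cast_le] at hle
  rw [mrk, hgreatest.csSup_eq, hIfin.cast_ncard_eq, hI.encard_eq_eRk]

theorem exists_indep_ncard_eq_mrk (hX : X.Finite) :
    ∃ I ⊆ X, M₀.Indep I ∧ I.ncard = mrk M₀ X :=
  Nat.sSup_mem (s := {n | ∃ I ⊆ X, M₀.Indep I ∧ I.ncard = n})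
    ⟨0, ∅, empty_subset X, M₀.empty_indep, ncard_empty _⟩
    ⟨X.ncard, by rintro _ ⟨I, hIX, -, rfl⟩; exact ncard_le_ncard hIX hX⟩

theorem nonempty_of_mrk_pos (h : 0 < mrk M₀ X) : X.Nonempty :=
  nonempty_iff_ne_empty.2 fun hX => by simp [hX, mrk] at h

theorem mrk_mono (hY : Y.Finite) (hXY : X ⊆ Y) : mrk M₀ X ≤ mrk M₀ Y := by
  have h := M₀.eRk_mono hXY
  rwa [← cast_mrk (hY.subset hXY), ← cast_mrk hY, Nat.cast_le] at h

theorem mrk_union_le (hX : X.Finite) (hY : Y.Finite) :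
    mrk M₀ (X ∪ Y) ≤ mrk M₀ X + mrk M₀ Y := by
  have h := M₀.eRk_union_le_eRk_add_eRk X Y
  rwa [← cast_mrk (hX.union hY), ← cast_mrk hX, ← cast_mrk hY, ← Nat.cast_add,
    Nat.cast_le] at h

theorem mrk_le_ncard (hX : X.Finite) : mrk M₀ X ≤ X.ncard := by
  have h := M₀.eRk_le_encard X
  rwa [← cast_mrk hX, ← hX.cast_ncard_eq, Nat.cast_le] at h

theorem Matroid.Indep.ncard_le_mrk (hI : M₀.Indep I) (hX : X.Finite) (hIX : I ⊆ X) :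
    I.ncard ≤ mrk M₀ X := by
  have h := hI.encard_le_eRk_of_subset hIX
  rwa [← cast_mrk hX, ← (hX.subset hIX).cast_ncard_eq, Nat.cast_le] at h

theorem mrk_le_mrk_of_subset_closure (hX : X.Finite) (hY : Y.Finite)
    (hXY : X ⊆ M₀.closure Y) : mrk M₀ X ≤ mrk M₀ Y := by
  have h := M₀.eRk_mono hXY
  rwa [M₀.eRk_closure_eq, ← cast_mrk hX, ← cast_mrk hY, Nat.cast_le] at h

theorem mrk_restrict {R : Set (Sym2 ℕ)} (hXR : X ⊆ R) : mrk (M₀.restrict R) X = mrk M₀ X := by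
  simp only [mrk, Matroid.restrict_indep_iff]
  congr! 3 with n
  exact ⟨fun ⟨I, hIX, hI, hn⟩ => ⟨I, hIX, hI.1, hn⟩,
    fun ⟨I, hIX, hI, hn⟩ => ⟨I, hIX, ⟨hI, hIX.trans hXR⟩, hn⟩⟩

end Rank

section EdgeSets

def edgesAt (F : Set (Sym2 ℕ)) (v : ℕ) : Set (Sym2 ℕ) := {e ∈ F | v ∈ e}

def neighbors (F : Set (Sym2 ℕ)) (v : ℕ) : Set ℕ := {y | s(v, y) ∈ F ∧ y ≠ v}

variable {F F' : Set (Sym2 ℕ)} {S T V : Set ℕ} {u v : ℕ}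

theorem Sym2.mk_right_injective {α : Type*} (a : α) :
    Function.Injective (fun b => s(a, b)) :=
  fun _ _ h => Sym2.congr_right.mp h

theorem edgesAt_subset : edgesAt F v ⊆ F := fun _ h => h.1

theorem edgesAt_finite (hF : F.Finite) : (edgesAt F v).Finite := hF.subset edgesAt_subset

theorem edgesAt_eq_image (hF : ∀ e ∈ F, ¬ e.IsDiag) :
    edgesAt F v = (fun y => s(v, y)) '' neighbors F v := by
  ext e
  constructor
  · rintro ⟨heF, hve⟩
    have hspec := Sym2.other_spec hve
    refine ⟨Sym2.Mem.other hve, ⟨by rwa [hspec], fun h => hF e heF ?_⟩, hspec⟩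
    rw [← hspec, h]
    exact Sym2.mk_isDiag_iff.2 rfl
  · rintro ⟨y, ⟨hyF, -⟩, rfl⟩
    exact ⟨hyF, Sym2.mem_mk_left v y⟩

theorem deg_eq_ncard_neighbors (hF : ∀ e ∈ F, ¬ e.IsDiag) :
    deg F v = (neighbors F v).ncard :=
  (congrArg ncard (edgesAt_eq_image hF)).trans
    (ncard_image_of_injective _ (Sym2.mk_right_injective v))

theorem neighbors_finite (hF : F.Finite) : (neighbors F v).Finite :=
  (hF.preimage (Sym2.mk_right_injective v).injOn).subset fun _ hy => hy.1

theorem neighbors_subset_eSupp : neighbors F v ⊆ eSupp F :=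
  fun y hy => ⟨s(v, y), hy.1, Sym2.mem_mk_right v y⟩

theorem insert_neighbors_subset_eSupp (hv : v ∈ eSupp F) :
    insert v (neighbors F v) ⊆ eSupp F :=
  insert_subset hv neighbors_subset_eSupp

theorem self_notMem_neighbors : v ∉ neighbors F v := fun h => h.2 rfl

theorem mem_eSupp_iff_one_le_deg (hF : F.Finite) : v ∈ eSupp F ↔ 1 ≤ deg F v := by
  change _ ↔ 1 ≤ (edgesAt F v).ncard
  rw [Nat.one_le_iff_ne_zero, Ne, ncard_eq_zero (edgesAt_finite hF), ← Ne,
    ← nonempty_iff_ne_empty]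
  rfl

theorem eSupp_finite (hF : F.Finite) : (eSupp F).Finite := by
  refine (hF.biUnion fun e _ => e.toFinset.finite_toSet).subset ?_
  rintro v ⟨e, heF, hve⟩
  exact mem_biUnion heF (Sym2.mem_toFinset.2 hve)

theorem eSupp_mono (h : F ⊆ F') : eSupp F ⊆ eSupp F' :=
  fun _ ⟨e, heF, hve⟩ => ⟨e, h heF, hve⟩

theorem eSupp_nonempty (hF : F.Nonempty) : (eSupp F).Nonempty := by
  obtain ⟨e, heF⟩ := hF
  induction e with
  | _ a b => exact ⟨a, s(a, b), heF, Sym2.mem_mk_left a b⟩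

theorem eSupp_union : eSupp (F ∪ F') = eSupp F ∪ eSupp F' := by
  ext v
  simp only [eSupp, mem_union, mem_ofPred_eq]
  constructor
  · rintro ⟨e, he | he, hve⟩
    exacts [Or.inl ⟨e, he, hve⟩, Or.inr ⟨e, he, hve⟩]
  · rintro (⟨e, he, hve⟩ | ⟨e, he, hve⟩)
    exacts [⟨e, Or.inl he, hve⟩, ⟨e, Or.inr he, hve⟩]

theorem deg_union_of_disjoint (hF : F.Finite) (hF' : F'.Finite) (hFF' : Disjoint F F') :
    deg (F ∪ F') v = deg F v + deg F' v := by
  have hsplit : edgesAt (F ∪ F') v = edgesAt F v ∪ edgesAt F' v := by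
    ext e
    simp only [edgesAt, mem_union, mem_ofPred_eq]
    tauto
  exact (congrArg ncard hsplit).trans (ncard_union_eq
    (hFF'.mono edgesAt_subset edgesAt_subset) (edgesAt_finite hF) (edgesAt_finite hF'))

theorem minDeg_le_deg (hv : v ∈ eSupp F) : minDeg F ≤ deg F v :=
  Nat.sInf_le ⟨v, hv, rfl⟩

theorem exists_deg_eq_minDeg (hF : F.Nonempty) : ∃ v ∈ eSupp F, deg F v = minDeg F := by
  obtain ⟨v, hv⟩ := eSupp_nonempty hF
  exact Nat.sInf_mem (s := {k | ∃ v ∈ eSupp F, deg F v = k}) ⟨deg F v, v, hv, rfl⟩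

theorem one_le_minDeg (hF : F.Finite) (hne : F.Nonempty) : 1 ≤ minDeg F := by
  obtain ⟨v, hv, hmin⟩ := exists_deg_eq_minDeg hne
  exact hmin ▸ (mem_eSupp_iff_one_le_deg hF).1 hv

theorem deleteVerts_subset : deleteVerts F S ⊆ F := fun _ h => h.1

theorem IsGraph.mono (hF' : IsGraph F') (h : F ⊆ F') : IsGraph F :=
  ⟨hF'.1.subset h, fun e he => hF'.2 e (h he)⟩

theorem deleteVerts_union : deleteVerts (F ∪ F') S = deleteVerts F S ∪ deleteVerts F' S := by
  ext e
  simp only [deleteVerts, mem_union, mem_ofPred_eq]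
  tauto

theorem deleteVerts_deleteVerts : deleteVerts (deleteVerts F S) T = deleteVerts F (S ∪ T) := by
  ext e
  simp only [deleteVerts, mem_union, mem_ofPred_eq]
  grind

theorem eSupp_deleteVerts_subset : eSupp (deleteVerts F S) ⊆ eSupp F \ S :=
  fun _ ⟨e, ⟨heF, heS⟩, hve⟩ => ⟨⟨e, heF, hve⟩, heS _ hve⟩

theorem deleteVerts_singleton_union_edgesAt : deleteVerts F {v} ∪ edgesAt F v = F := by
  ext e
  simp only [deleteVerts, edgesAt, mem_union, mem_ofPred_eq, mem_singleton_iff]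
  grind

theorem deg_deleteVerts_add_ncard_le (hF : F.Finite) (hS : S ⊆ neighbors F v) :
    deg (deleteVerts F S) v + S.ncard ≤ deg F v := by
  have hdisj : Disjoint (edgesAt (deleteVerts F S) v) ((fun y => s(v, y)) '' S) := by
    refine disjoint_left.2 fun e ⟨⟨_, heS⟩, _⟩ ⟨y, hy, hye⟩ => heS y ?_ hy
    exact hye ▸ Sym2.mem_mk_right v y
  have hsub : edgesAt (deleteVerts F S) v ∪ (fun y => s(v, y)) '' S ⊆ edgesAt F v := by
    refine union_subset (fun e ⟨⟨heF, _⟩, hve⟩ => ⟨heF, hve⟩) ?_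
    rintro _ ⟨y, hy, rfl⟩
    exact ⟨(hS hy).1, Sym2.mem_mk_left v y⟩
  have := ncard_le_ncard hsub (edgesAt_finite hF)
  rwa [ncard_union_eq hdisj ((edgesAt_finite hF).subset (subset_union_left.trans hsub))
    ((edgesAt_finite hF).subset (subset_union_right.trans hsub)),
    ncard_image_of_injective _ (Sym2.mk_right_injective v)] at this

theorem deg_le_deg_deleteVerts_singleton_add_one (hF : F.Finite) (huv : u ≠ v) :
    deg F u ≤ deg (deleteVerts F {v}) u + 1 := by
  have hsub : edgesAt F u ⊆ insert s(u, v) (edgesAt (deleteVerts F {v}) u) := by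
    rintro e ⟨heF, hue⟩
    by_cases hve : v ∈ e
    · exact Or.inl ((Sym2.mem_and_mem_iff huv).1 ⟨hue, hve⟩)
    · refine mem_insert_of_mem _ ⟨⟨heF, fun w hwe hw => ?_⟩, hue⟩
      exact hve (mem_singleton_iff.1 hw ▸ hwe)
  calc deg F u ≤ (insert s(u, v) (edgesAt (deleteVerts F {v}) u)).ncard :=
        ncard_le_ncard hsub ((edgesAt_finite (hF.subset deleteVerts_subset)).insert _)
    _ ≤ deg (deleteVerts F {v}) u + 1 := ncard_insert_le _ _

theorem eSupp_deleteVerts_singleton (hF : F.Finite) (hdeg : ∀ u ∈ eSupp F, 2 ≤ deg F u) :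
    eSupp (deleteVerts F {v}) = eSupp F \ {v} := by
  refine eSupp_deleteVerts_subset.antisymm fun u ⟨hu, huv⟩ => ?_
  rw [mem_eSupp_iff_one_le_deg (hF.subset deleteVerts_subset)]
  have := deg_le_deg_deleteVerts_singleton_add_one hF huv
  have := hdeg u hu
  omega

theorem clique_mono (h : S ⊆ T) : clique S ⊆ clique T :=
  fun _ he => ⟨he.1, fun v hv => h (he.2 v hv)⟩

theorem clique_finite (hV : V.Finite) : (clique V).Finite := by
  refine ((hV.prod hV).image (Function.uncurry Sym2.mk)).subset fun e he => ?_
  induction e with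
  | _ a b =>
    exact ⟨(a, b), ⟨he.2 a (Sym2.mem_mk_left a b), he.2 b (Sym2.mem_mk_right a b)⟩, rfl⟩

theorem eSupp_clique_subset : eSupp (clique V) ⊆ V := fun _ ⟨_, he, hve⟩ => he.2 _ hve

theorem subset_clique_eSupp (hF : ∀ e ∈ F, ¬ e.IsDiag) : F ⊆ clique (eSupp F) :=
  fun e he => ⟨hF e he, fun _ hv => ⟨e, he, hv⟩⟩

theorem mk_mem_clique (huv : u ≠ v) (hu : u ∈ V) (hv : v ∈ V) : s(u, v) ∈ clique V := by
  refine ⟨by simpa using huv, fun w hw => ?_⟩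
  rcases Sym2.mem_iff.1 hw with rfl | rfl
  exacts [hu, hv]

theorem mrk_le_mrk_deleteVerts_add_deg {M₀ : Matroid (Sym2 ℕ)} (hF : F.Finite) (v : ℕ) :
    mrk M₀ F ≤ mrk M₀ (deleteVerts F {v}) + deg F v := by
  conv_lhs => rw [← deleteVerts_singleton_union_edgesAt (F := F) (v := v)]
  exact (mrk_union_le (hF.subset deleteVerts_subset) (edgesAt_finite hF)).trans
    (Nat.add_le_add_left (mrk_le_ncard (edgesAt_finite hF)) _)

end EdgeSets

section Relabel

theorem exists_perm_eqOn {A : Set ℕ} (hA : A.Finite) {f : ℕ → ℕ} (hf : InjOn f A) :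
    ∃ σ : Equiv.Perm ℕ, EqOn σ f A := by
  classical
  have hB : (f '' A).Finite := hA.image f
  have : Infinite (Aᶜ : Set ℕ) := hA.infinite_compl.to_subtype
  have : Infinite ((f '' A)ᶜ : Set ℕ) := hB.infinite_compl.to_subtype
  have : Denumerable (Aᶜ : Set ℕ) := Nat.Subtype.denumerable _
  have : Denumerable ((f '' A)ᶜ : Set ℕ) := Nat.Subtype.denumerable _
  let e : A ⊕ (Aᶜ : Set ℕ) ≃ (f '' A) ⊕ ((f '' A)ᶜ : Set ℕ) :=
    Equiv.sumCongr (Equiv.Set.imageOfInjOn f A hf)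
      ((Denumerable.eqv _).trans (Denumerable.eqv _).symm)
  refine ⟨(Equiv.Set.sumCompl A).symm.trans (e.trans (Equiv.Set.sumCompl (f '' A))),
    fun a ha => ?_⟩
  simp only [Equiv.trans_apply, Equiv.Set.sumCompl_symm_apply_of_mem ha]
  rfl

theorem Set.InjOn.union_of_mapsTo {α β : Type*} {f : α → β} {s₁ s₂ : Set α} {t₁ t₂ : Set β}
    (h₁ : InjOn f s₁) (h₂ : InjOn f s₂) (hf₁ : MapsTo f s₁ t₁) (hf₂ : MapsTo f s₂ t₂)
    (ht : Disjoint t₁ t₂) :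
    InjOn f (s₁ ∪ s₂) := by
  rintro x (hx | hx) y (hy | hy) hxy
  · exact h₁ hx hy hxy
  · exact (ht.ne_of_mem (hf₁ hx) (hf₂ hy) hxy).elim
  · exact (ht.ne_of_mem (hf₁ hy) (hf₂ hx) hxy.symm).elim
  · exact h₂ hx hy hxy

theorem exists_perm_relabel {W N P Q : Set ℕ} {u v : ℕ} (hW : W.Finite) (hP : P.Finite)
    (hu : u ∈ W) (hNW : N ⊆ W) (huN : u ∉ N) (hvP : v ∉ P) (hQP : Q ⊆ P)
    (hNQ : N.ncard = Q.ncard) (hrest : (W \ insert u N).ncard ≤ (P \ Q).ncard) :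
    ∃ σ : Equiv.Perm ℕ, σ u = v ∧ σ '' N = Q ∧ MapsTo σ W (insert v P) := by
  classical
  have hN : N.Finite := hW.subset hNW
  have hQ : Q.Finite := hP.subset hQP
  obtain ⟨f, hf⟩ := hN.exists_bijOn_of_encard_eq (t := Q)
    (by rw [← hN.cast_ncard_eq, ← hQ.cast_ncard_eq, hNQ])
  obtain ⟨g, hgmaps : MapsTo g _ (P \ Q), hginj⟩ :=
    hW.sdiff.exists_injOn_of_encard_le (t := P \ Q) (by
      rw [← hW.sdiff.cast_ncard_eq, ← hP.sdiff.cast_ncard_eq]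
      exact_mod_cast hrest)
  let φ : ℕ → ℕ := fun x => if x = u then v else if x ∈ N then f x else g x
  have hφN : EqOn φ f N := fun x hx => by simp [φ, hx, ne_of_mem_of_not_mem hx huN]
  have hφR : EqOn φ g (W \ insert u N) := fun x hx => by
    simp only [mem_sdiff, mem_insert_iff, not_or] at hx
    simp [φ, hx.2.1, hx.2.2]
  have hWsplit : W = {u} ∪ (N ∪ W \ insert u N) := by
    ext x; simp only [mem_union, mem_singleton_iff, mem_sdiff, mem_insert_iff]
    constructor
    · tauto
    · rintro (rfl | hx | ⟨hx, -⟩) <;> first | exact hu | exact hNW hx | exact hx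
  have hfN : MapsTo φ N Q := hf.mapsTo.congr hφN.symm
  have hgR : MapsTo φ (W \ insert u N) (P \ Q) := hgmaps.congr hφR.symm
  have hφinj : InjOn φ W := by
    rw [hWsplit]
    refine (injOn_singleton φ u).union_of_mapsTo ((hf.injOn.congr hφN.symm).union_of_mapsTo
      (hginj.congr hφR.symm) hfN hgR disjoint_sdiff_right) (t₁ := {v}) (by simp [MapsTo, φ])
      (hfN.union_union hgR) ?_
    simpa [union_sdiff_cancel hQP] using hvP
  obtain ⟨σ, hσ⟩ := exists_perm_eqOn hW hφinj
  refine ⟨σ, (hσ hu).trans (by simp [φ]), (hσ.mono hNW).image_eq.trans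
    ((hφN.image_eq).trans hf.image_eq), fun x hx => ?_⟩
  rw [hσ hx]
  rw [hWsplit] at hx
  rcases hx with rfl | hx | hx
  · simp [φ]
  · exact mem_insert_of_mem _ (hQP (hfN hx))
  · exact mem_insert_of_mem _ (hgR hx).1

end Relabel

theorem KConnected.mono {k j : ℕ} {G : Set (Sym2 ℕ)} (h : KConnected k G) (hjk : j ≤ k) :
    KConnected j G :=
  ⟨lt_of_le_of_lt hjk h.1, fun S hS => h.2 S (lt_of_lt_of_le hS hjk)⟩

theorem KConnected.deleteVerts_singleton {k v : ℕ} {G : Set (Sym2 ℕ)}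
    (h : KConnected (k + 1) G) (hv : v ∈ eSupp G)
    (hsupp : eSupp (deleteVerts G {v}) = eSupp G \ {v}) : KConnected k (deleteVerts G {v}) := by
  classical
  refine ⟨?_, fun S hS => ?_⟩
  · rw [hsupp, ncard_sdiff_singleton_of_mem hv]
    have := h.1
    omega
  have hsets : eSupp (deleteVerts G {v}) \ ↑S = eSupp G \ ↑(insert v S) := by
    rw [hsupp, Finset.coe_insert, sdiff_sdiff, singleton_union]
  have hinduce :
      (SimpleGraph.fromEdgeSet (deleteVerts G {v})).induce (eSupp G \ ↑(insert v S)) =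
        (SimpleGraph.fromEdgeSet G).induce (eSupp G \ ↑(insert v S)) := by
    ext ⟨a, ha⟩ ⟨b, hb⟩
    have hav : a ≠ v := fun h => ha.2 (by simp [h])
    have hbv : b ≠ v := fun h => hb.2 (by simp [h])
    simp [deleteVerts, hav, hbv]
  rw [hsets, hinduce]
  exact h.2 _ ((Finset.card_insert_le v S).trans_lt (by omega))

theorem KConnected.eSupp_inter_nonempty {G E₁ E₂ : Set (Sym2 ℕ)} (h : KConnected 1 G)
    (hE : E₁ ∪ E₂ = G) (h₁ : E₁.Nonempty) (h₂ : E₂.Nonempty) :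
    (eSupp E₁ ∩ eSupp E₂).Nonempty := by
  by_contra hempty
  have hV : eSupp G = eSupp E₁ ∪ eSupp E₂ := hE ▸ eSupp_union
  obtain ⟨x, hx⟩ := eSupp_nonempty h₁
  obtain ⟨y, hy⟩ := eSupp_nonempty h₂
  have hconn := h.2 ∅ (by simp)
  rw [Finset.coe_empty, sdiff_empty] at hconn
  obtain ⟨p⟩ := hconn.preconnected ⟨x, hV ▸ Or.inl hx⟩ ⟨y, hV ▸ Or.inr hy⟩
  obtain ⟨⟨⟨⟨a, _⟩, ⟨b, _⟩⟩, hab⟩, -, ha, hb⟩ :=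
    p.exists_boundary_dart {z | (z : ℕ) ∈ eSupp E₁} hx fun hy₁ => hempty ⟨y, hy₁, hy⟩
  simp only [SimpleGraph.comap_adj, Function.Embedding.coe_subtype,
    SimpleGraph.fromEdgeSet_adj] at hab
  rcases hE ▸ hab.1 with hab₁ | hab₂
  · exact hb ⟨_, hab₁, Sym2.mem_mk_right a b⟩
  · exact hempty ⟨a, ha, _, hab₂, Sym2.mem_mk_left a b⟩

/-- For `M₀ ↾ G`, this rules out vertical `k'`-separations with `k' ≤ k`. -/
def RankSplitBound (M₀ : Matroid (Sym2 ℕ)) (k : ℕ) (G : Set (Sym2 ℕ)) : Prop :=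
  ∀ E₁ E₂ : Set (Sym2 ℕ), Disjoint E₁ E₂ → E₁ ∪ E₂ = G →
    mrk M₀ G + min (min (mrk M₀ E₁) (mrk M₀ E₂)) k ≤ mrk M₀ E₁ + mrk M₀ E₂

theorem RankSplitBound.zero {M₀ : Matroid (Sym2 ℕ)} {G : Set (Sym2 ℕ)} (hG : G.Finite) :
    RankSplitBound M₀ 0 G := by
  intro E₁ E₂ _ hE
  simpa [← hE] using mrk_union_le (M₀ := M₀) (hG.subset (hE ▸ subset_union_left))
    (hG.subset (hE ▸ subset_union_right))

theorem RankSplitBound.verticallyConnected {M₀ : Matroid (Sym2 ℕ)} {k : ℕ}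
    {G : Set (Sym2 ℕ)} (h : RankSplitBound M₀ k G) (hrank : k + 1 ≤ mrk M₀ G) :
    VerticallyConnected (M₀.restrict G) (k + 1) := by
  refine ⟨(mrk_restrict subset_rfl).symm ▸ hrank, ?_⟩
  rintro k' - hk' E₁ E₂ ⟨hdisj, hE : E₁ ∪ E₂ = G, h₁, h₂, hsep⟩
  have hE₁ : E₁ ⊆ G := hE ▸ subset_union_left
  have hE₂ : E₂ ⊆ G := hE ▸ subset_union_right
  rw [mrk_restrict hE₁] at h₁ hsep
  rw [mrk_restrict hE₂] at h₂ hsep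
  rw [Matroid.restrict_ground_eq, mrk_restrict subset_rfl] at hsep
  have := h E₁ E₂ hdisj hE
  omega

namespace GraphMatroidFamily

variable {M : GraphMatroidFamily} {d t k : ℕ} {F G A C X E₁ E₂ : Set (Sym2 ℕ)}
  {S V Y : Set ℕ} {v x y : ℕ}

theorem indep_image_perm_iff (σ : Equiv.Perm ℕ) :
    M.M.Indep (Sym2.map σ '' X) ↔ M.M.Indep X := by
  refine ⟨fun h => ?_, M.invariant σ X⟩
  simpa [image_image, Sym2.map_map] using M.invariant σ.symm _ h

theorem IsCircuit.image_perm (hC : M.IsCircuit C) (σ : Equiv.Perm ℕ) :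
    M.IsCircuit (Sym2.map σ '' C) := by
  obtain ⟨⟨hCfin, hCdiag⟩, hCdep, hCdel⟩ := hC
  have hinj := Sym2.map.injective σ.injective
  refine ⟨⟨hCfin.image _, ?_⟩, fun h => hCdep ((indep_image_perm_iff σ).1 h), ?_⟩
  · rintro _ ⟨e, he, rfl⟩
    rw [Sym2.isDiag_map σ.injective]
    exact hCdiag e he
  · rintro _ ⟨e, he, rfl⟩
    rw [← image_singleton, ← image_sdiff hinj]
    exact (indep_image_perm_iff σ).2 (hCdel e he)

theorem isCircuit_iff : M.IsCircuit C ↔ M.M.IsCircuit C := by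
  have := M.finitary
  refine ⟨fun h => Matroid.isCircuit_iff_dep_forall_sdiff_singleton_indep.2
    ⟨⟨h.2.1, fun e he => M.ground_eq ▸ h.1.2 e he⟩, h.2.2⟩, fun h => ?_⟩
  exact ⟨⟨h.finite, fun e he => by simpa [M.ground_eq] using h.subset_ground he⟩, h.not_indep,
    fun e he => h.sdiff_singleton_indep he⟩

theorem IsCircuit.nonempty (hC : M.IsCircuit C) : C.Nonempty :=
  nonempty_iff_ne_empty.2 fun h => hC.2.1 (h ▸ M.M.empty_indep)

theorem IsDimensionality.succ_le_minDeg (hd : M.IsDimensionality d) (hC : M.IsCircuit C) :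
    d + 1 ≤ minDeg C := by
  have h1 := one_le_minDeg hC.1.1 hC.nonempty
  have := hd.2 ⟨C, hC, (Nat.sub_add_cancel h1).symm⟩
  omega

/-- A circuit through one of the new edges would have degree at most `d` at `v`. -/
theorem IsDimensionality.indep_union (hd : M.IsDimensionality d) (hX : M.M.Indep X)
    (hvX : v ∉ eSupp X) (hA : A.Finite) (hAv : ∀ e ∈ A, v ∈ e ∧ ¬ e.IsDiag)
    (hAd : A.ncard ≤ d) : M.M.Indep (X ∪ A) := by
  by_contra hdep
  have hXA : X ∪ A ⊆ M.M.E := union_subset hX.subset_ground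
    (M.ground_eq ▸ fun e he => (hAv e he).2)
  obtain ⟨C, hCXA, hC⟩ := (M.M.not_indep_iff hXA).1 hdep |>.exists_isCircuit_subset
  rw [← isCircuit_iff] at hC
  obtain ⟨a, haC, haX⟩ : ∃ a ∈ C, a ∉ X :=
    not_subset.1 fun hCX => hC.2.1 (hX.subset hCX)
  have hvC : v ∈ eSupp C := ⟨a, haC, (hAv a ((hCXA haC).resolve_left haX)).1⟩
  have hCv : edgesAt C v ⊆ A := fun e ⟨heC, hve⟩ =>
    (hCXA heC).resolve_left fun heX => hvX ⟨e, heX, hve⟩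
  have := ncard_le_ncard hCv hA
  have := minDeg_le_deg hvC
  have := hd.succ_le_minDeg hC
  change minDeg C ≤ (edgesAt C v).ncard at *
  omega

theorem IsDimensionality.mrk_add_ncard_le (hd : M.IsDimensionality d) (hF : F.Finite)
    (hvF : v ∉ eSupp F) (hA : A.Finite) (hAv : ∀ e ∈ A, v ∈ e ∧ ¬ e.IsDiag)
    (hAd : A.ncard ≤ d) : mrk M.M F + A.ncard ≤ mrk M.M (F ∪ A) := by
  obtain ⟨X, hXF, hX, hXcard⟩ := exists_indep_ncard_eq_mrk (M₀ := M.M) hF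
  have hvX : v ∉ eSupp X := fun h => hvF (eSupp_mono hXF h)
  have hXA : Disjoint X A :=
    disjoint_left.2 fun e heX heA => hvX ⟨e, heX, (hAv e heA).1⟩
  rw [← hXcard, ← ncard_union_eq hXA (hF.subset hXF) hA]
  exact (hd.indep_union hX hvX hA hAv hAd).ncard_le_mrk (hF.union hA)
    (union_subset_union_left A hXF)

theorem IsDimensionality.mrk_deleteVerts_add_min_le (hd : M.IsDimensionality d)
    (hF : IsGraph F) (v : ℕ) : mrk M.M (deleteVerts F {v}) + min (deg F v) d ≤ mrk M.M F := by
  obtain ⟨A, hAv, hAcard⟩ := exists_subset_card_eq (min_le_left (deg F v) d)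
  have hvF : v ∉ eSupp (deleteVerts F {v}) := fun h =>
    (eSupp_deleteVerts_subset h).2 rfl
  have h := hd.mrk_add_ncard_le (hF.1.subset deleteVerts_subset) hvF
    ((edgesAt_finite hF.1).subset hAv) (fun e he => ⟨(hAv he).2, hF.2 e (hAv he).1⟩)
    (hAcard ▸ min_le_right _ _)
  rw [hAcard] at h
  refine h.trans (mrk_mono hF.1 (union_subset deleteVerts_subset (hAv.trans edgesAt_subset)))

theorem IsDimensionality.mrk_clique_add_min_le (hd : M.IsDimensionality d) (hV : V.Finite)
    (hvV : v ∉ V) : mrk M.M (clique V) + min V.ncard d ≤ mrk M.M (clique (insert v V)) := by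
  obtain ⟨Y, hYV, hYcard⟩ := exists_subset_card_eq (min_le_left V.ncard d)
  have hYv : ∀ y ∈ Y, y ≠ v := fun y hy h => hvV (h ▸ hYV hy)
  have hAcard : ((fun y => s(v, y)) '' Y).ncard = min V.ncard d := by
    rw [ncard_image_of_injective _ (Sym2.mk_right_injective v), hYcard]
  have h := hd.mrk_add_ncard_le (clique_finite hV) (fun h => hvV (eSupp_clique_subset h))
    ((hV.subset hYV).image _) (by
      rintro _ ⟨y, hy, rfl⟩
      exact ⟨Sym2.mem_mk_left v y, by simpa using (hYv y hy).symm⟩)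
    (hAcard ▸ min_le_right _ _)
  rw [hAcard] at h
  refine h.trans (mrk_mono (clique_finite (hV.insert v)) (union_subset
    (clique_mono (subset_insert v V)) ?_))
  rintro _ ⟨y, hy, rfl⟩
  exact mk_mem_clique (hYv y hy).symm (mem_insert v V) (mem_insert_of_mem v (hYV hy))

theorem IsDimensionality.le_mrk_of_le_deg (hd : M.IsDimensionality d) (hd0 : 0 < d) {δ : ℕ}
    (hF : IsGraph F) (hne : F.Nonempty) (hdeg : ∀ u ∈ eSupp F, δ ≤ deg F u) :
    δ ≤ mrk M.M F := by
  induction δ generalizing F with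
  | zero => exact Nat.zero_le _
  | succ δ ih =>
    obtain ⟨e, he⟩ := hne
    obtain ⟨⟨v, y⟩, rfl⟩ := Sym2.mk_surjective e
    have hv : v ∈ eSupp F := ⟨_, he, Sym2.mem_mk_left v y⟩
    have hstep := hd.mrk_deleteVerts_add_min_le hF v
    by_cases hδd : δ + 1 ≤ d
    · have := hdeg v hv
      omega
    -- `F - v` keeps the neighbour `y` of `v`, and its degrees drop by at most one.
    have hsupp := eSupp_deleteVerts_singleton (v := v) hF.1 fun u hu => by
      have := hdeg u hu
      omega
    have hy : y ∈ eSupp (deleteVerts F {v}) := by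
      rw [hsupp]
      exact ⟨⟨_, he, Sym2.mem_mk_right v y⟩, fun h => hF.2 _ he (h ▸ Sym2.mk_isDiag_iff.2 rfl)⟩
    obtain ⟨e', he', -⟩ := hy
    have := ih (hF.mono deleteVerts_subset) ⟨e', he'⟩ fun u hu => by
      have hu' : u ∈ eSupp F \ {v} := hsupp ▸ hu
      have := deg_le_deg_deleteVerts_singleton_add_one hF.1 hu'.2
      have := hdeg u hu'.1
      omega
    have := hdeg v hv
    omega

theorem IsThreshold.exists_circuit (ht : M.IsThreshold d t) : ∃ C u, M.IsCircuit C ∧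
    u ∈ eSupp C ∧ (neighbors C u).ncard = d + 1 ∧ (eSupp C).ncard = t + 1 := by
  obtain ⟨C, hC, hCmin, hCcard⟩ := ht.1
  obtain ⟨u, hu, hudeg⟩ := exists_deg_eq_minDeg hC.nonempty
  exact ⟨C, u, hC, hu, by rw [← deg_eq_ncard_neighbors hC.1.2, hudeg, hCmin], hCcard⟩

theorem IsThreshold.succ_le (ht : M.IsThreshold d t) : d + 1 ≤ t := by
  obtain ⟨C, u, hC, hu, hN, hW⟩ := ht.exists_circuit
  have := ncard_le_ncard (insert_neighbors_subset_eSupp hu) (eSupp_finite hC.1.1)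
  rw [ncard_insert_of_notMem self_notMem_neighbors (neighbors_finite hC.1.1), hN, hW] at this
  omega

/-- The threshold circuit, relabelled so that a vertex of degree `d + 1` becomes `v`, its
neighbours become `Y ∪ {y}` and its other vertices land in `V`, spans `s(v, y)` by its other
edges. -/
theorem IsThreshold.mk_mem_closure (ht : M.IsThreshold d t) (hV : V.Finite) (htV : t ≤ V.ncard)
    (hvV : v ∉ V) (hYV : Y ⊆ V) (hYcard : Y.ncard = d) (hyV : y ∈ V) (hyY : y ∉ Y) :
    s(v, y) ∈ M.M.closure (clique V ∪ (fun z => s(v, z)) '' Y) := by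
  obtain ⟨C₀, u, hC₀, hu, hN, hW⟩ := ht.exists_circuit
  have hC₀fin := hC₀.1.1
  have hyYcard : (insert y Y).ncard = d + 1 := by
    rw [ncard_insert_of_notMem hyY (hV.subset hYV), hYcard]
  have hrest : (eSupp C₀ \ insert u (neighbors C₀ u)).ncard ≤ (V \ insert y Y).ncard := by
    have hsub := insert_neighbors_subset_eSupp hu
    rw [ncard_sdiff hsub (eSupp_finite hC₀fin |>.subset hsub),
      ncard_sdiff (insert_subset hyV hYV) ((hV.subset hYV).insert y),
      ncard_insert_of_notMem self_notMem_neighbors (neighbors_finite hC₀fin), hN, hW,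
      hyYcard]
    omega
  obtain ⟨σ, hσu, hσN, hσW⟩ := exists_perm_relabel (eSupp_finite hC₀fin) hV hu
    ((subset_insert _ _).trans (insert_neighbors_subset_eSupp hu)) self_notMem_neighbors hvV
    (insert_subset hyV hYV) (hN.trans hyYcard.symm) hrest
  obtain ⟨w, hw, hσw⟩ : y ∈ σ '' neighbors C₀ u := hσN ▸ mem_insert y Y
  have hvy : s(v, y) ∈ Sym2.map σ '' C₀ := ⟨s(u, w), hw.1, by simp [hσu, hσw]⟩
  refine M.M.closure_subset_closure ?_ <|
    (isCircuit_iff.1 (hC₀.image_perm σ)).mem_closure_sdiff_singleton_of_mem hvy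
  rintro _ ⟨⟨e, he, rfl⟩, hne⟩
  by_cases hue : u ∈ e
  · right
    obtain ⟨b, rfl⟩ : ∃ b, e = s(u, b) := ⟨_, (Sym2.other_spec hue).symm⟩
    have hb : b ∈ neighbors C₀ u :=
      ⟨he, fun hbu => hC₀.1.2 _ he (hbu ▸ Sym2.mk_isDiag_iff.2 rfl)⟩
    rcases (hσN ▸ mem_image_of_mem σ hb : σ b ∈ insert y Y) with hby | hbY
    · exact (hne (by simp [hσu, hby])).elim
    · exact ⟨σ b, hbY, by simp [hσu]⟩
  · left
    refine ⟨(Sym2.isDiag_map σ.injective).not.2 (hC₀.1.2 e he), fun x hx => ?_⟩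
    obtain ⟨a, ha, rfl⟩ := Sym2.mem_map.1 hx
    rcases hσW ⟨e, he, ha⟩ with hav | haV
    · exact (hue (σ.injective (hav.trans hσu.symm) ▸ ha)).elim
    · exact haV

theorem IsThreshold.mrk_clique_insert_le (ht : M.IsThreshold d t) (hV : V.Finite)
    (htV : t ≤ V.ncard) (hvV : v ∉ V) :
    mrk M.M (clique (insert v V)) ≤ mrk M.M (clique V) + d := by
  obtain ⟨Y, hYV, hYcard⟩ := exists_subset_card_eq (show d ≤ V.ncard by
    have := ht.succ_le; omega)
  have hYfin := hV.subset hYV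
  have hspan : clique (insert v V) ⊆ M.M.closure (clique V ∪ (fun z => s(v, z)) '' Y) := by
    have hground : clique V ∪ (fun z => s(v, z)) '' Y ⊆ M.M.E := by
      rw [M.ground_eq]
      rintro _ (he | ⟨z, hz, rfl⟩)
      · exact he.1
      · exact Sym2.mk_isDiag_iff.not.2 fun h => hvV (h ▸ hYV hz)
    intro e he
    by_cases hve : v ∈ e
    · obtain ⟨b, rfl⟩ : ∃ b, e = s(v, b) := ⟨_, (Sym2.other_spec hve).symm⟩
      have hbV : b ∈ V := (he.2 b (Sym2.mem_mk_right v b)).resolve_left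
        fun hbv => he.1 (hbv ▸ Sym2.mk_isDiag_iff.2 rfl)
      by_cases hbY : b ∈ Y
      · exact M.M.subset_closure _ hground (Or.inr ⟨b, hbY, rfl⟩)
      · exact ht.mk_mem_closure hV htV hvV hYV hYcard hbV hbY
    · refine M.M.subset_closure _ hground (Or.inl ⟨he.1, fun x hx => ?_⟩)
      exact (he.2 x hx).resolve_left fun hxv => hve (hxv ▸ hx)
  calc mrk M.M (clique (insert v V))
      ≤ mrk M.M (clique V ∪ (fun z => s(v, z)) '' Y) :=
        mrk_le_mrk_of_subset_closure (clique_finite (hV.insert v))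
          ((clique_finite hV).union (hYfin.image _)) hspan
    _ ≤ mrk M.M (clique V) + ((fun z => s(v, z)) '' Y).ncard :=
        (mrk_union_le (clique_finite hV) (hYfin.image _)).trans
          (Nat.add_le_add_left (mrk_le_ncard (hYfin.image _)) _)
    _ = mrk M.M (clique V) + d := by
        rw [ncard_image_of_injective _ (Sym2.mk_right_injective v), hYcard]

theorem mrk_clique_insert (hd : M.IsDimensionality d) (ht : M.IsThreshold d t)
    (hV : V.Finite) (htV : t ≤ V.ncard) (hvV : v ∉ V) :
    mrk M.M (clique (insert v V)) = mrk M.M (clique V) + d := by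
  refine (ht.mrk_clique_insert_le hV htV hvV).antisymm ?_
  have hstep := hd.mrk_clique_add_min_le hV hvV
  have := ht.succ_le
  rwa [min_eq_right (by omega)] at hstep

theorem mrk_clique_eq_mrk_clique_sdiff_add (hd : M.IsDimensionality d)
    (ht : M.IsThreshold d t) (hV : V.Finite) (hx : x ∈ V) (htV : t + 1 ≤ V.ncard) :
    mrk M.M (clique V) = mrk M.M (clique (V \ {x})) + d := by
  have := mrk_clique_insert hd ht (hV.sdiff (t := {x}))
    (by rw [ncard_sdiff_singleton_of_mem hx]; omega) (fun h => h.2 rfl)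
  rwa [insert_sdiff_singleton, insert_eq_of_mem hx] at this

/-- For `d = 0` the ranks of the complete graphs would stabilise from `K_t` on. -/
theorem IsDimensionality.pos (hd : M.IsDimensionality d) (ht : M.IsThreshold d t)
    (hu : M.Unbounded) : 0 < d := by
  by_contra! hd0
  obtain rfl : d = 0 := by omega
  have hfin (n : ℕ) : {v : ℕ | v < n}.Finite := finite_lt_nat n
  have hstable (n : ℕ) : mrk M.M (cliqueN n) ≤ mrk M.M (cliqueN t) := by
    rcases le_total n t with hnt | htn
    · exact mrk_mono (clique_finite (hfin t)) (clique_mono fun v hv => lt_of_lt_of_le hv hnt)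
    induction n, htn using Nat.le_induction with
    | base => exact le_rfl
    | succ n htn ih =>
      have hcard : {v : ℕ | v < n}.ncard = n := by
        rw [show {v : ℕ | v < n} = ↑(Finset.range n) by ext; simp, ncard_coe_finset,
          Finset.card_range]
      have hins : {v : ℕ | v < n + 1} = insert n {v | v < n} := by
        ext v; simp only [mem_ofPred_eq, mem_insert_iff]; omega
      have := ht.mrk_clique_insert_le (hfin n) (hcard.symm ▸ htn) (v := n) (lt_irrefl n)
      rw [← hins] at this
      exact this.trans ih
  obtain ⟨n, hn⟩ := hu (mrk M.M (cliqueN t))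
  exact (hstable n).not_gt hn

theorem IsDimensionality.mul_sub_le_mrk_clique (hd : M.IsDimensionality d) (hV : V.Finite) :
    d * (V.ncard - d) ≤ mrk M.M (clique V) := by
  induction V, hV using Set.Finite.induction_on with
  | empty => simp
  | @insert v V hvV hV ih =>
    have hstep := hd.mrk_clique_add_min_le hV hvV
    rw [ncard_insert_of_notMem hvV hV]
    rcases lt_or_ge V.ncard d with hlt | hge
    · rw [show V.ncard + 1 - d = 0 by omega, mul_zero]
      exact Nat.zero_le _
    · rw [min_eq_right hge] at hstep
      rw [show V.ncard + 1 - d = V.ncard - d + 1 by omega, mul_add_one]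
      omega

theorem IsDimensionality.mul_succ_le_mrk (hd : M.IsDimensionality d) (ht : M.IsThreshold d t)
    (hrig : M.Rigid G) (hG : G.Finite) (hcard : k + t ≤ (eSupp G).ncard) :
    d * (k + 1) ≤ mrk M.M G :=
  (Nat.mul_le_mul_left d (by have := ht.succ_le; omega)).trans
    ((hd.mul_sub_le_mrk_clique (eSupp_finite hG)).trans_eq hrig.symm)

theorem VertexRedundantlyRigid.mono (h : M.VertexRedundantlyRigid k G) {j : ℕ} (hjk : j ≤ k) :
    M.VertexRedundantlyRigid j G :=
  ⟨h.1, fun S hS hSj => h.2 S hS (hSj.trans hjk)⟩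

theorem VertexRedundantlyRigid.mrk_deleteVerts (h : M.VertexRedundantlyRigid k G)
    (hS : S.Finite) (hSG : S ⊆ eSupp G) (hSk : S.ncard ≤ k) :
    mrk M.M (deleteVerts G S) = mrk M.M (clique (eSupp G \ S)) := by
  have := h.2 hS.toFinset (by rwa [hS.coe_toFinset]) (by rwa [← ncard_eq_toFinset_card S hS])
  rwa [hS.coe_toFinset] at this

theorem VertexRedundantlyRigid.deleteVerts_singleton (h : M.VertexRedundantlyRigid (k + 1) G)
    (hv : v ∈ eSupp G) (hsupp : eSupp (deleteVerts G {v}) = eSupp G \ {v}) :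
    M.VertexRedundantlyRigid k (deleteVerts G {v}) := by
  classical
  refine ⟨?_, fun S hS hSk => ?_⟩
  · rw [Rigid, rk, rk, hsupp]
    exact h.mrk_deleteVerts (finite_singleton v) (singleton_subset_iff.2 hv) (by simp)
  have := h.2 (insert v S) (by
    rw [Finset.coe_insert]
    exact insert_subset hv (hS.trans (hsupp ▸ sdiff_subset))) ((Finset.card_insert_le v S).trans
      (by omega))
  rwa [RigidOn, Finset.coe_insert, ← singleton_union, ← deleteVerts_deleteVerts,
    ← sdiff_sdiff, ← hsupp] at this

theorem VertexRedundantlyRigid.mrk_deleteVerts_singleton_add (hd : M.IsDimensionality d)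
    (ht : M.IsThreshold d t) (h : M.VertexRedundantlyRigid 1 G) (hG : G.Finite)
    (hv : v ∈ eSupp G) (hcard : t + 1 ≤ (eSupp G).ncard) :
    mrk M.M (deleteVerts G {v}) + d = mrk M.M G := by
  rw [h.mrk_deleteVerts (finite_singleton v) (singleton_subset_iff.2 hv) (by simp),
    ← mrk_clique_eq_mrk_clique_sdiff_add hd ht (eSupp_finite hG) hv hcard]
  exact h.1.symm

theorem mrk_add_le_of_notMem_eSupp (hd : M.IsDimensionality d) (ht : M.IsThreshold d t)
    (hrig : M.Rigid G) (hG : IsGraph G) (hFG : F ⊆ G) (hx : x ∈ eSupp G)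
    (hxF : x ∉ eSupp F) (hcard : t + 1 ≤ (eSupp G).ncard) : mrk M.M F + d ≤ mrk M.M G := by
  have hFx : F ⊆ clique (eSupp G \ {x}) :=
    (subset_clique_eSupp fun e he => hG.2 e (hFG he)).trans
      (clique_mono fun u hu => ⟨eSupp_mono hFG hu, fun hux => hxF (hux ▸ hu)⟩)
  have := mrk_mono (M₀ := M.M) (clique_finite (eSupp_finite hG.1).sdiff) hFx
  have := mrk_clique_eq_mrk_clique_sdiff_add hd ht (eSupp_finite hG.1) hx hcard
  have : mrk M.M G = mrk M.M (clique (eSupp G)) := hrig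
  omega

theorem VertexRedundantlyRigid.add_le_deg (hd : M.IsDimensionality d) (ht : M.IsThreshold d t)
    (hd0 : 0 < d) (h : M.VertexRedundantlyRigid k G) (hG : IsGraph G)
    (hcard : k + t ≤ (eSupp G).ncard) (hv : v ∈ eSupp G) : d + k ≤ deg G v := by
  obtain ⟨S, hSN, hScard⟩ := exists_subset_card_eq
    (show min k (deg G v) ≤ (neighbors G v).ncard from
      deg_eq_ncard_neighbors hG.2 ▸ min_le_right _ _)
  have hSfin := (neighbors_finite hG.1).subset hSN
  have hSG : S ⊆ eSupp G := hSN.trans neighbors_subset_eSupp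
  have hvV' : v ∈ eSupp G \ S := ⟨hv, fun h => self_notMem_neighbors (hSN h)⟩
  have hV'fin : (eSupp G \ S).Finite := (eSupp_finite hG.1).sdiff
  -- with `S` a set of `min k (deg G v)` neighbours of `v`, the rank of the rigid graph `G - S`
  -- exceeds that of `K_{V - S - v}` by `d` but that of `G - S - v` by at most `deg G v - |S|`
  have hrig := h.mrk_deleteVerts hSfin hSG (hScard ▸ min_le_left _ _)
  have hlow := hd.mrk_clique_add_min_le (hV'fin.sdiff (t := {v})) (fun h => h.2 rfl)
  rw [insert_sdiff_singleton, insert_eq_of_mem hvV', ncard_sdiff_singleton_of_mem hvV',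
    ncard_sdiff hSG hSfin, hScard] at hlow
  have hup := mrk_le_mrk_deleteVerts_add_deg (M₀ := M.M)
    (hG.1.subset (deleteVerts_subset (S := S))) v
  have hGSv : mrk M.M (deleteVerts (deleteVerts G S) {v}) ≤
      mrk M.M (clique ((eSupp G \ S) \ {v})) :=
    mrk_mono (clique_finite hV'fin.sdiff) ((subset_clique_eSupp fun e he =>
      hG.2 e (deleteVerts_subset (deleteVerts_subset he))).trans (clique_mono
        (eSupp_deleteVerts_subset.trans (sdiff_subset_sdiff_left eSupp_deleteVerts_subset))))
  have hdegS := deg_deleteVerts_add_ncard_le hG.1 hSN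
  have := ht.succ_le
  rw [hScard] at hdegS
  rw [min_eq_right (by omega)] at hlow
  omega

theorem exists_vertex_of_tight (hd : M.IsDimensionality d) (hd0 : 0 < d) (hG : IsGraph G)
    (hdisj : Disjoint E₁ E₂) (hE : E₁ ∪ E₂ = G) (hdeg : ∀ v ∈ eSupp G, d + (k + 1) ≤ deg G v)
    (hmiss : ∀ F ⊆ G, ∀ x ∈ eSupp G, x ∉ eSupp F → mrk M.M F + d ≤ mrk M.M G)
    (hW : (eSupp E₁ ∩ eSupp E₂).Nonempty) (hrG : k + 2 * d ≤ mrk M.M G)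
    (htight : mrk M.M E₁ + mrk M.M E₂ = mrk M.M G + k) (hr₁ : k + 1 ≤ mrk M.M E₁)
    (hr₂ : k + 1 ≤ mrk M.M E₂) : ∃ v ∈ eSupp E₁ ∩ eSupp E₂,
      k + 1 + d ≤ mrk M.M E₁ + min (deg E₂ v) d ∧
        k + 1 + d ≤ mrk M.M E₂ + min (deg E₁ v) d := by
  wlog hbig : k + d ≤ mrk M.M E₁ generalizing E₁ E₂
  · obtain ⟨v, hv, hB, hC⟩ := this hdisj.symm ((union_comm E₂ E₁).trans hE)
      (inter_comm (eSupp E₁) _ ▸ hW) (by omega) hr₂ hr₁ (by omega)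
    exact ⟨v, inter_comm (eSupp E₂) _ ▸ hv, hC, hB⟩
  have hE₁ : E₁ ⊆ G := hE ▸ subset_union_left
  have hE₂ : E₂ ⊆ G := hE ▸ subset_union_right
  have hsplit (v : ℕ) : deg G v = deg E₁ v + deg E₂ v :=
    hE ▸ deg_union_of_disjoint (hG.1.subset hE₁) (hG.1.subset hE₂) hdisj
  have hB (v : ℕ) (hv : v ∈ eSupp E₂) : k + 1 + d ≤ mrk M.M E₁ + min (deg E₂ v) d := by
    have := (mem_eSupp_iff_one_le_deg (hG.1.subset hE₂)).1 hv
    omega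
  obtain ⟨v, hv₂, hvmin⟩ :=
    exists_min_image _ (deg E₂) (eSupp_finite (hG.1.subset hE₂)) (hW.mono inter_subset_right)
  by_cases hv₁ : v ∈ eSupp E₁
  · refine ⟨v, ⟨hv₁, hv₂⟩, hB v hv₂, ?_⟩
    have := hd.le_mrk_of_le_deg hd0 (hG.mono hE₂) (hv₂.elim fun e he => ⟨e, he.1⟩) hvmin
    have := hdeg v (eSupp_mono hE₂ hv₂)
    rw [hsplit] at this
    omega
  · -- `E₁` misses a vertex, so `r(E₁) ≤ r(G) - d` and `E₂` is a big side as well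
    have := hmiss E₁ hE₁ v (eSupp_mono hE₂ hv₂) hv₁
    obtain ⟨w, hw₁, hw₂⟩ := hW
    refine ⟨w, ⟨hw₁, hw₂⟩, hB w hw₂, ?_⟩
    have := (mem_eSupp_iff_one_le_deg (hG.1.subset hE₁)).1 hw₁
    omega

/-- Deleting `v` lowers `r(G)` by `d` but `r(E₁) + r(E₂)` by at least
`min(deg_{E₁} v, d) + min(deg_{E₂} v, d) > d`. -/
theorem add_lt_of_rankSplitBound_deleteVerts (hd : M.IsDimensionality d) (hd0 : 0 < d)
    (hG : IsGraph G) (hdisj : Disjoint E₁ E₂) (hE : E₁ ∪ E₂ = G) (hv₁ : v ∈ eSupp E₁)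
    (hv₂ : v ∈ eSupp E₂)
    (hdeg : d + 1 ≤ deg G v) (hGv : mrk M.M (deleteVerts G {v}) + d = mrk M.M G)
    (hbound : RankSplitBound M.M k (deleteVerts G {v}))
    (hB : k + 1 + d ≤ mrk M.M E₁ + min (deg E₂ v) d)
    (hC : k + 1 + d ≤ mrk M.M E₂ + min (deg E₁ v) d) :
    mrk M.M G + k < mrk M.M E₁ + mrk M.M E₂ := by
  have hE₁ : E₁ ⊆ G := hE ▸ subset_union_left
  have hE₂ : E₂ ⊆ G := hE ▸ subset_union_right
  have := hbound _ _ (hdisj.mono deleteVerts_subset deleteVerts_subset)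
    (by rw [← deleteVerts_union, hE])
  have := hd.mrk_deleteVerts_add_min_le (hG.mono hE₁) v
  have := hd.mrk_deleteVerts_add_min_le (hG.mono hE₂) v
  have hA : d + 1 ≤ min (deg E₁ v) d + min (deg E₂ v) d := by
    have := (mem_eSupp_iff_one_le_deg (hG.1.subset hE₁)).1 hv₁
    have := (mem_eSupp_iff_one_le_deg (hG.1.subset hE₂)).1 hv₂
    rw [← hE, deg_union_of_disjoint (hG.1.subset hE₁) (hG.1.subset hE₂) hdisj] at hdeg
    simp only [min_def]
    split_ifs <;> omega
  omega

theorem rankSplitBound_succ (hd : M.IsDimensionality d) (ht : M.IsThreshold d t) (hd0 : 0 < d)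
    (ih : ∀ {G : Set (Sym2 ℕ)}, IsGraph G → KConnected k G → M.VertexRedundantlyRigid k G →
      k + t ≤ (eSupp G).ncard → RankSplitBound M.M k G)
    (hG : IsGraph G) (hconn : KConnected (k + 1) G) (hred : M.VertexRedundantlyRigid (k + 1) G)
    (hcard : k + 1 + t ≤ (eSupp G).ncard) : RankSplitBound M.M (k + 1) G := by
  intro E₁ E₂ hdisj hE
  have hk := ih hG (hconn.mono k.le_succ) (hred.mono k.le_succ) (by omega) E₁ E₂ hdisj hE
  by_contra! hlt
  have hr₁ : k + 1 ≤ mrk M.M E₁ := by omega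
  have hr₂ : k + 1 ≤ mrk M.M E₂ := by omega
  have htight : mrk M.M E₁ + mrk M.M E₂ = mrk M.M G + k := by omega
  have hdeg (v : ℕ) (hv : v ∈ eSupp G) : d + (k + 1) ≤ deg G v :=
    hred.add_le_deg hd ht hd0 hG hcard hv
  have hrG : k + 2 * d ≤ mrk M.M G := by
    have h := hd.mul_succ_le_mrk ht hred.1 hG.1 hcard
    rw [mul_add_one, mul_add_one] at h
    have := Nat.le_mul_of_pos_left k hd0
    omega
  have hW := (hconn.mono (by omega : 1 ≤ k + 1)).eSupp_inter_nonempty hE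
    (nonempty_of_mrk_pos (M₀ := M.M) (by omega)) (nonempty_of_mrk_pos (M₀ := M.M) (by omega))
  obtain ⟨v, ⟨hv₁, hv₂⟩, hB, hC⟩ := exists_vertex_of_tight hd hd0 hG hdisj hE hdeg
    (fun F hF x hx hxF => mrk_add_le_of_notMem_eSupp hd ht hred.1 hG hF hx hxF (by omega))
    hW hrG htight hr₁ hr₂
  have hv : v ∈ eSupp G := eSupp_mono (hE ▸ subset_union_left) hv₁
  have hsupp := eSupp_deleteVerts_singleton (v := v) hG.1 fun u hu => by
    have := hdeg u hu
    omega
  have hbound := ih (hG.mono deleteVerts_subset) (hconn.deleteVerts_singleton hv hsupp)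
    (hred.deleteVerts_singleton hv hsupp) (by rw [hsupp, ncard_sdiff_singleton_of_mem hv]; omega)
  have hGv := (hred.mono (by omega)).mrk_deleteVerts_singleton_add hd ht hG.1 hv (by omega)
  exact (add_lt_of_rankSplitBound_deleteVerts hd hd0 hG hdisj hE hv₁ hv₂
    (by have := hdeg v hv; omega) hGv hbound hB hC).ne' htight

theorem rankSplitBound (hd : M.IsDimensionality d) (ht : M.IsThreshold d t) (hd0 : 0 < d)
    (hG : IsGraph G) (hconn : KConnected k G) (hred : M.VertexRedundantlyRigid k G)
    (hcard : k + t ≤ (eSupp G).ncard) : RankSplitBound M.M k G := by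
  induction k generalizing G with
  | zero => exact RankSplitBound.zero hG.1
  | succ k ih => exact rankSplitBound_succ hd ht hd0 ih hG hconn hred hcard

end GraphMatroidFamily

theorem redundantly_rigid_vertically_connected_general (M : GraphMatroidFamily) (d t : ℕ)
    (hu : M.Unbounded)
    (hd : M.IsDimensionality d) (ht : M.IsThreshold d t)
    (G : Set (Sym2 ℕ)) (hG : IsGraph G) (k : ℕ)
    (hconn : KConnected k G) (hred : M.VertexRedundantlyRigid k G)
    (hcard : k + t ≤ (eSupp G).ncard) :
    VerticallyConnected (M.M.restrict G) (k + 1) := by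
  have hd0 := hd.pos ht hu
  refine (M.rankSplitBound hd ht hd0 hG hconn hred hcard).verticallyConnected ?_
  exact (Nat.le_mul_of_pos_left _ hd0).trans (hd.mul_succ_le_mrk ht hred.1 hG.1 hcard)

/-- Let `G` be a graph and `M` a nontrivial, unbounded graph matroid
family with dimensionality `d` and threshold `t`.  If `G` is `k`-connected,
`k`-vertex-redundantly `M`-rigid, and has at least `k + t` vertices, then `M(G)` is
vertically `(k+1)`-connected. -/
theorem redundantly_rigid_vertically_connected (M : GraphMatroidFamily) (d t : ℕ)
    (hu : M.Unbounded) (hnt : ¬ M.Trivial)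
    (hd : M.IsDimensionality d) (ht : M.IsThreshold d t)
    (G : Set (Sym2 ℕ)) (hG : IsGraph G) (k : ℕ)
    (hconn : KConnected k G) (hred : M.VertexRedundantlyRigid k G)
    (hcard : k + t ≤ (eSupp G).ncard) :
    VerticallyConnected (M.M.restrict G) (k + 1) :=
  redundantly_rigid_vertically_connected_general M d t hu hd ht G hG k hconn hred hcard
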